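/- Let B be a disk in ℝ², D ⊂ B a convex polygon, and f ∈ C(∂B) with f(x) ≠ 0 for all x ∈ ∂B. Let u be harmonic in B \ D̄, continuous up to ∂B, with u = f on ∂B and u = 0 on ∂D. Then u cannot be extended analytically (harmonically) across any corner of D. -/

import Mathlib

open Complex Metric Set MeasureTheory Real

noncomputable def lap (u : ℂ → ℝ) (x : ℂ) : ℝ :=
  fderiv ℝ (fun y => fderiv ℝ u y 1) x 1 +
  fderiv ℝ (fun y => fderiv ℝ u y Complex.I) x Complex.I

/-- `u` is harmonic on `s`: twice differentiable with vanishing Laplacian. -/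
def HarmonicOnD (u : ℂ → ℝ) (s : Set ℂ) : Prop :=
  ContDiffOn ℝ 2 u s ∧ ∀ x ∈ s, lap u x = 0

open Topology Filter InnerProductSpace Laplacian

/-! If a harmonic extension `v` of `u` existed across a corner `z`, it would be real analytic
there and vanish on the part of an edge of `D` near `z`, where `u = 0`. Along the line of that
edge `v` is then a real-analytic function of one variable vanishing on an interval, so it vanishes
on the whole ray beyond `z`. By convexity this ray runs through `B \ D` until it meets `∂B`, and
continuity of `u` up to `∂B` forces `f = 0` at that point. -/

theorem lap_eq_laplacian {u : ℂ → ℝ} {x : ℂ} (hu : ContDiffAt ℝ 2 u x) : lap u x = Δ u x := by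
  have hd : DifferentiableAt ℝ (fderiv ℝ u) x :=
    (hu.fderiv_right le_rfl).differentiableAt one_ne_zero
  simp [lap, laplacian_eq_iteratedFDeriv_complexPlane, iteratedFDeriv_two_apply,
    fderiv_clm_apply hd (differentiableAt_const _)]

theorem HarmonicOnD.harmonicOnNhd {u : ℂ → ℝ} {s : Set ℂ} (hu : HarmonicOnD u s)
    (hs : IsOpen s) : HarmonicOnNhd u s := by
  intro x hx
  refine ⟨hu.1.contDiffAt (hs.mem_nhds hx), ?_⟩
  filter_upwards [hs.mem_nhds hx] with y hy
  rw [← lap_eq_laplacian (hu.1.contDiffAt (hs.mem_nhds hy))]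
  exact hu.2 y hy

theorem HarmonicOnD.analyticOnNhd {u : ℂ → ℝ} {s : Set ℂ} (hu : HarmonicOnD u s)
    (hs : IsOpen s) : AnalyticOnNhd ℝ u s :=
  fun x hx => HarmonicAt.analyticAt (hu.harmonicOnNhd hs x hx)

theorem ContinuousWithinAt.eq_of_eqOn_of_mem_closure {X Y : Type*} [TopologicalSpace X]
    [TopologicalSpace Y] [T2Space Y] {f g : X → Y} {s : Set X} {x : X} (hx : x ∈ closure s)
    (hf : ContinuousWithinAt f s x) (hg : ContinuousWithinAt g s x) (h : EqOn f g s) :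
    f x = g x :=
  isClosed_diagonal.closure_subset ((hf.prodMk hg).mem_closure hx h)

theorem AnalyticOnNhd.eqOn_zero_along_ray {E F : Type*} [NormedAddCommGroup E]
    [NormedSpace ℝ E] [NormedAddCommGroup F] [NormedSpace ℝ F] [CompleteSpace F] {v : E → F}
    {U : Set E} (hv : AnalyticOnNhd ℝ v U) {z d : E} {T : ℝ} (hzU : z ∈ U)
    (hray : ∀ t ∈ Ioo 0 T, z + t • d ∈ U) (hleft : ∀ᶠ t in 𝓝[<] (0 : ℝ), v (z + t • d) = 0) :
    ∀ t ∈ Ioo 0 T, v (z + t • d) = 0 := by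
  have hline : Continuous fun t : ℝ => z + t • d := by fun_prop
  have hA : {y | AnalyticAt ℝ v y} ∈ 𝓝 (z + (0 : ℝ) • d) := by
    rw [zero_smul, add_zero]
    exact (hv z hzU).eventually_analyticAt
  obtain ⟨l, r, ⟨hl, hr⟩, hlr⟩ :=
    mem_nhds_iff_exists_Ioo_subset.mp (hline.continuousAt.preimage_mem_nhds hA)
  obtain ⟨l', hl', hl'0⟩ := mem_nhdsLT_iff_exists_Ioo_subset.mp hleft
  set a := max l l'
  have ha : a < 0 := max_lt hl hl'
  have hφ : AnalyticOnNhd ℝ (fun t : ℝ => v (z + t • d)) (Ioo a T) := fun t ht => by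
    refine AnalyticAt.comp (f := fun t : ℝ => z + t • d) ?_ (by fun_prop)
    rcases le_or_gt t 0 with h | h
    · exact hlr ⟨(le_max_left _ _).trans_lt ht.1, h.trans_lt hr⟩
    · exact hv _ (hray t ⟨h, ht.2⟩)
  intro t ht
  refine hφ.eqOn_zero_of_preconnected_of_eventuallyEq_zero isPreconnected_Ioo (z₀ := a / 2)
    ⟨by linarith, by linarith [ht.1, ht.2]⟩ ?_ ⟨ha.trans ht.1, ht.2⟩
  filter_upwards [Ioo_mem_nhds (by linarith : a < a / 2) (by linarith : a / 2 < 0)] with s hs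
  exact hl'0 ⟨(le_max_right _ _).trans_lt hs.1, hs.2⟩

theorem Set.EqOn.eq_of_mem_frontier {X Y : Type*} [TopologicalSpace X] [TopologicalSpace Y]
    [T2Space Y] {u v : X → Y} {O D : Set X} (hO : IsOpen O) (hvu : EqOn v u (O \ D)) {x : X}
    (hxO : x ∈ O) (hxD : x ∈ frontier D) (hv : ContinuousWithinAt v (O \ D) x)
    (hu : ContinuousWithinAt u (O \ D) x) : v x = u x :=
  hv.eq_of_eqOn_of_mem_closure
    (hO.inter_closure ⟨hxO, frontier_subset_closure (frontier_compl D ▸ hxD)⟩) hu hvu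

theorem ContinuousWithinAt.eq_zero_of_eqOn_zero_Ioo {E F : Type*} [NormedAddCommGroup E]
    [NormedSpace ℝ E] [TopologicalSpace F] [T2Space F] [Zero F] {u : E → F} {S : Set E}
    {z d : E} {T : ℝ} (hT : 0 < T) (hS : ∀ t ∈ Ioo 0 T, z + t • d ∈ S)
    (hu : ContinuousWithinAt u S (z + T • d)) (h0 : ∀ t ∈ Ioo 0 T, u (z + t • d) = 0) :
    u (z + T • d) = 0 := by
  have hend : z + T • d ∈ closure ((fun t : ℝ => z + t • d) '' Ioo 0 T) :=
    image_closure_subset_closure_image (by fun_prop)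
      ⟨T, by rw [closure_Ioo hT.ne]; exact right_mem_Icc.mpr hT.le, rfl⟩
  refine (hu.mono (image_subset_iff.mpr hS)).eq_of_eqOn_of_mem_closure hend
    continuousWithinAt_const ?_
  rintro _ ⟨t, ht, rfl⟩
  exact h0 t ht

section Convex

variable {E : Type*} [NormedAddCommGroup E] [NormedSpace ℝ E]

theorem ContinuousLinearMap.le_of_mem_convexHull (L : E →L[ℝ] ℝ) {s : Set E} {a : ℝ}
    (h : ∀ q ∈ s, L q ≤ a) {x : E} (hx : x ∈ convexHull ℝ s) : L x ≤ a := by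
  obtain ⟨y, hy, hxy⟩ :=
    (L.toLinearMap.convexOn convex_univ).exists_ge_of_mem_convexHull (subset_univ s) hx
  exact hxy.trans (h y hy)

theorem exists_clm_lt_of_notMem_convexHull_diff {s : Set E} (hs : s.Finite) {z : E}
    (hz : z ∉ convexHull ℝ (s \ {z})) : ∃ ℓ : E →L[ℝ] ℝ, ∀ q ∈ s, q ≠ z → ℓ q < ℓ z := by
  obtain ⟨ℓ, a, hℓ, haz⟩ := geometric_hahn_banach_closed_point (convex_convexHull ℝ _)
    ((hs.subset sdiff_subset).isClosed_convexHull (𝕜 := ℝ)) hz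
  exact ⟨ℓ, fun q hq hqz => (hℓ q (subset_convexHull ℝ _ ⟨hq, hqz⟩)).trans haz⟩

theorem mem_frontier_of_isMaxOn {L : E →L[ℝ] ℝ} (hL : L ≠ 0) {D : Set E} {x : E} (hx : x ∈ D)
    (hmax : IsMaxOn L D x) : x ∈ frontier D :=
  ⟨subset_closure hx, fun hint =>
    hL ((hmax.isLocalMax (mem_interior_iff_mem_nhds.mp hint)).hasFDerivAt_eq_zero L.hasFDerivAt)⟩

theorem exists_pos_add_smul_mem_sphere {c z d : E} {R : ℝ} (hz : z ∈ ball c R) (hd : d ≠ 0) :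
    ∃ T : ℝ, 0 < T ∧ z + T • d ∈ sphere c R ∧ ∀ t ∈ Ioo 0 T, z + t • d ∈ ball c R := by
  have hR := pos_of_mem_ball hz
  set M := (R + dist z c) / ‖d‖
  have hM : 0 ≤ M := by positivity
  have hfar : R ≤ dist (z + M • d) c := by
    have : dist (z + M • d) z = R + dist z c := by
      rw [dist_self_add_left, norm_smul, Real.norm_of_nonneg hM,
        div_mul_cancel₀ _ (norm_ne_zero_iff.mpr hd)]
    linarith [dist_triangle (z + M • d) c z, dist_comm z c]
  obtain ⟨T, hT, hTR⟩ := intermediate_value_Icc hM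
    (by fun_prop : ContinuousOn (fun t : ℝ => dist (z + t • d) c) (Icc 0 M))
    ⟨by simpa using (mem_ball.mp hz).le, hfar⟩
  have hTpos : 0 < T := hT.1.lt_of_ne' fun h => (mem_ball.mp hz).ne (by simpa [h] using hTR)
  refine ⟨T, hTpos, hTR, fun t ht => ?_⟩
  have hseg := (convex_closedBall c R).openSegment_interior_closure_subset_interior
    (x := z) (y := z + T • d) (by rwa [interior_closedBall c hR.ne'])
    (subset_closure (sphere_subset_closedBall hTR))
  rw [interior_closedBall c hR.ne', openSegment_eq_image'] at hseg
  refine hseg ⟨t / T, ⟨div_pos ht.1 hTpos, (div_lt_one hTpos).mpr ht.2⟩, ?_⟩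
  simp only [add_sub_cancel_left, smul_smul, div_mul_cancel₀ _ hTpos.ne']

end Convex

-- Rotating `ℓ` about `z`: `ℓ (I * ·) + s • ℓ` supports `P` at `z` iff `s ≥ r q` for every other
-- vertex `q`, so the least admissible slope `s = r w` also touches the vertex `w`.
theorem exists_supporting_clm_through_two_vertices {P : Finset ℂ} {z : ℂ} {ℓ : ℂ →L[ℝ] ℝ}
    (hℓ : ∀ q ∈ P, q ≠ z → ℓ q < ℓ z) (hP : (P.erase z).Nonempty) :
    ∃ w ∈ P.erase z, ∃ L : ℂ →L[ℝ] ℝ, L ≠ 0 ∧ (∀ q ∈ P, L q ≤ L z) ∧ L w = L z := by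
  set m : ℂ →L[ℝ] ℝ := ℓ.comp (ContinuousLinearMap.mul ℝ ℂ I)
  have hm : ∀ x, m x = ℓ (I * x) := fun x => rfl
  set r : ℂ → ℝ := fun q => m (q - z) / (ℓ z - ℓ q)
  obtain ⟨w, hw, hwmax⟩ := (P.erase z).exists_max_image r hP
  have hgap : ∀ q ∈ P.erase z, 0 < ℓ z - ℓ q := fun q hq =>
    sub_pos.mpr (hℓ q (Finset.mem_of_mem_erase hq) (Finset.ne_of_mem_erase hq))
  have hmr : ∀ q ∈ P.erase z, m q - m z = r q * (ℓ z - ℓ q) := fun q hq => by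
    rw [div_mul_cancel₀ _ (hgap q hq).ne', map_sub]
  refine ⟨w, hw, m + r w • ℓ, fun hL => ?_, fun q hq => ?_, ?_⟩
  · have h1 := congrArg (· (z - w)) hL
    have h2 := congrArg (· (I * (z - w))) hL
    simp only [add_apply, smul_apply, smul_eq_mul, zero_apply, hm, ← mul_assoc, I_mul_I,
      neg_one_mul, map_neg] at h1 h2
    rw [map_sub] at h1 h2
    have : (1 + r w ^ 2) * (ℓ z - ℓ w) = 0 := by linear_combination r w * h1 - h2
    exact (mul_pos (by positivity) (hgap w hw)).ne' this
  · simp only [add_apply, smul_apply, smul_eq_mul]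
    by_cases hqz : q = z
    · rw [hqz]
    have hq' : q ∈ P.erase z := Finset.mem_erase.mpr ⟨hqz, hq⟩
    nlinarith [hmr q hq', hwmax q hq', hgap q hq']
  · simp only [add_apply, smul_apply, smul_eq_mul]
    linarith [hmr w hw]

theorem exists_edge_of_vertex {P : Finset ℂ} {z : ℂ} (hz : z ∈ P)
    (hvert : z ∉ convexHull ℝ ((P : Set ℂ) \ {z}))
    (hint : (interior (convexHull ℝ (P : Set ℂ))).Nonempty) :
    ∃ d : ℂ, d ≠ 0 ∧ (∀ t ∈ Icc (-1 : ℝ) 0, z + t • d ∈ frontier (convexHull ℝ (P : Set ℂ))) ∧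
      ∀ t : ℝ, 0 < t → z + t • d ∉ convexHull ℝ (P : Set ℂ) := by
  have hP : (P.erase z).Nonempty := by
    by_contra hP
    have hsub : (P : Set ℂ) ⊆ {z} := fun q hq => by_contra fun hqz =>
      hP ⟨q, Finset.mem_erase.mpr ⟨hqz, hq⟩⟩
    obtain ⟨x, hx⟩ := hint
    simpa using interior_mono ((convexHull_mono hsub).trans_eq (convexHull_singleton z)) hx
  obtain ⟨ℓ, hℓ⟩ := exists_clm_lt_of_notMem_convexHull_diff P.finite_toSet hvert
  obtain ⟨w, hw, L, hL0, hLz, hLw⟩ := exists_supporting_clm_through_two_vertices hℓ hP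
  obtain ⟨hwz, hwP⟩ := Finset.mem_erase.mp hw
  have hℓD : ∀ y ∈ convexHull ℝ (P : Set ℂ), ℓ y ≤ ℓ z := fun y hy =>
    ℓ.le_of_mem_convexHull (fun q hq => by
      rcases eq_or_ne q z with rfl | hqz
      exacts [le_rfl, (hℓ q hq hqz).le]) hy
  refine ⟨z - w, sub_ne_zero.mpr hwz.symm, fun t ht => ?_, fun t ht hmem => ?_⟩
  · have hmem : z + t • (z - w) ∈ convexHull ℝ (P : Set ℂ) := by
      have := (convex_convexHull ℝ (P : Set ℂ)).add_smul_sub_mem (subset_convexHull ℝ _ hz)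
        (subset_convexHull ℝ _ hwP) (t := -t) ⟨by linarith [ht.2], by linarith [ht.1]⟩
      convert this using 2
      module
    refine mem_frontier_of_isMaxOn hL0 hmem fun y hy => ?_
    have : L (z + t • (z - w)) = L z := by
      rw [map_add, map_smul, map_sub, hLw, sub_self, smul_zero, add_zero]
    show L y ≤ _
    rw [this]
    exact L.le_of_mem_convexHull hLz hy
  · have := hℓD _ hmem
    simp only [map_add, map_smul, map_sub, smul_eq_mul] at this
    nlinarith [hℓ w hwP hwz]

theorem stmt3_general (c : ℂ) (R : ℝ) (P : Finset ℂ)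
    (D : Set ℂ) (hD : D = convexHull ℝ (P : Set ℂ))
    (hDB : D ⊆ ball c R) (hDi : (interior D).Nonempty)
    (hvert : ∀ z ∈ (P : Set ℂ), z ∉ convexHull ℝ ((P : Set ℂ) \ {z}))
    (f : ℂ → ℝ)
    (hfnz : ∀ z ∈ sphere c R, f z ≠ 0)
    (u : ℂ → ℝ)
    (huc : ContinuousOn u (closure (ball c R) \ interior D))
    (huf : ∀ z ∈ sphere c R, u z = f z)
    (huz : ∀ z ∈ frontier D, u z = 0) :
    ∀ z ∈ (P : Set ℂ), ¬ ∃ V : Set ℂ, IsOpen V ∧ z ∈ V ∧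
      ∃ v : ℂ → ℝ, HarmonicOnD v (V ∪ (ball c R \ D)) ∧
        Set.EqOn v u (ball c R \ D) := by
  rintro z hz ⟨V, hVo, hzV, v, hv, hvu⟩
  have hDc : IsClosed D := hD ▸ P.finite_toSet.isClosed_convexHull (𝕜 := ℝ)
  have hU : IsOpen (V ∪ (ball c R \ D)) := hVo.union (isOpen_ball.sdiff hDc)
  have hsub : ball c R \ D ⊆ closure (ball c R) \ interior D :=
    sdiff_subset_sdiff subset_closure interior_subset
  have hvD : ∀ x ∈ frontier D, x ∈ V → v x = 0 := fun x hxD hxV => by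
    have hxB := hDB (hDc.frontier_subset hxD)
    rw [hvu.eq_of_mem_frontier isOpen_ball hxB hxD
      (hv.1.continuousOn.continuousAt (hU.mem_nhds (.inl hxV))).continuousWithinAt
      ((huc x ⟨subset_closure hxB, hxD.2⟩).mono hsub), huz x hxD]
  have hzB := hDB (hD ▸ subset_convexHull ℝ _ hz)
  obtain ⟨d, hd, hedge, hout⟩ := exists_edge_of_vertex hz (hvert z hz) (hD ▸ hDi)
  rw [← hD] at hedge hout
  obtain ⟨T, hT, hTs, hTb⟩ := exists_pos_add_smul_mem_sphere hzB hd
  have hray : ∀ t ∈ Ioo 0 T, z + t • d ∈ ball c R \ D := fun t ht => ⟨hTb t ht, hout t ht.1⟩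
  have hleft : ∀ᶠ t in 𝓝[<] (0 : ℝ), v (z + t • d) = 0 := by
    filter_upwards [Ioo_mem_nhdsLT (by norm_num : (-1 : ℝ) < 0), nhdsWithin_le_nhds
      ((by fun_prop : Continuous fun t : ℝ => z + t • d).continuousAt.preimage_mem_nhds
        (by simpa using hVo.mem_nhds hzV))] with t ht htV
    exact hvD _ (hedge t ⟨ht.1.le, ht.2.le⟩) htV
  have hv0 := (hv.analyticOnNhd hU).eqOn_zero_along_ray (.inl hzV) (fun t ht => .inr (hray t ht))
    hleft
  have hTS : z + T • d ∈ closure (ball c R) \ interior D :=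
    ⟨closure_ball c (pos_of_mem_ball hzB).ne' ▸ sphere_subset_closedBall hTs, fun h =>
      (mem_sphere.mp hTs ▸ mem_ball.mp (hDB (interior_subset h))).false⟩
  refine hfnz _ hTs (huf _ hTs ▸ ?_)
  exact ((huc _ hTS).mono hsub).eq_zero_of_eqOn_zero_Ioo hT hray fun t ht =>
    (hvu (hray t ht)).symm.trans (hv0 t ht)

/-- If f is continuous and nonvanishing on the boundary circle, the solution of
the Dirichlet obstacle problem with a convex polygonal obstacle cannot be
extended harmonically across any corner (vertex) of the polygon. -/
theorem stmt3 (c : ℂ) (R : ℝ) (hR : 0 < R) (P : Finset ℂ)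
    (D : Set ℂ) (hD : D = convexHull ℝ (P : Set ℂ))
    (hDB : D ⊆ ball c R) (hDi : (interior D).Nonempty)
    (hvert : ∀ z ∈ (P : Set ℂ), z ∉ convexHull ℝ ((P : Set ℂ) \ {z}))
    (f : ℂ → ℝ) (hfc : ContinuousOn f (sphere c R))
    (hfnz : ∀ z ∈ sphere c R, f z ≠ 0)
    (u : ℂ → ℝ)
    (hu : HarmonicOnD u (ball c R \ D))
    (huc : ContinuousOn u (closure (ball c R) \ interior D))
    (huf : ∀ z ∈ sphere c R, u z = f z)
    (huz : ∀ z ∈ frontier D, u z = 0) :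
    ∀ z ∈ (P : Set ℂ), ¬ ∃ V : Set ℂ, IsOpen V ∧ z ∈ V ∧
      ∃ v : ℂ → ℝ, HarmonicOnD v (V ∪ (ball c R \ D)) ∧
        Set.EqOn v u (ball c R \ D) :=
  stmt3_general c R P D hD hDB hDi hvert f hfnz u huc huf huz
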